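/- arXiv:2011.13766 — 2 statements merged into one kernel-verified Lean document; each statement's English description precedes it below -/
import Mathlib

section
/- Let R be a commutative ring, A = ⊕_{n∈ℕ} A_n a finitely generated graded R-algebra with A_0 = R, and M = ⊕_{n∈ℕ} M_n a finitely generated graded A-module. Then there exists an integer a ≥ 1 such that M_{an+r} = A_a^{n-1} · M_{a+r} for all n ≥ 1 and all 0 ≤ r ≤ a-1. -/
/-- The product `p · q` of an `R`-submodule `p` of an `R`-algebra `A` with an `R`-submodule
`q` of an `A`-module `M`: the `R`-submodule of `M` generated by products `s • m` with
`s ∈ p`, `m ∈ q`. -/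
def Submodule.algSMul {R A M : Type*} [CommRing R] [CommRing A] [Algebra R A]
    [AddCommGroup M] [Module R M] [Module A M] [IsScalarTower R A M]
    (p : Submodule R A) (q : Submodule R M) : Submodule R M :=
  Submodule.span R {x | ∃ s ∈ p, ∃ m ∈ q, x = s • m}

namespace StmtAux

variable {R A M : Type*} [CommRing R] [CommRing A] [Algebra R A]
    [AddCommGroup M] [Module R M] [Module A M] [IsScalarTower R A M]

theorem smul_mem_algSMul {p : Submodule R A} {q : Submodule R M} {s : A} {m : M}
    (hs : s ∈ p) (hm : m ∈ q) : s • m ∈ p.algSMul q :=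
  Submodule.subset_span ⟨s, hs, m, hm, rfl⟩

theorem algSMul_le {p : Submodule R A} {q : Submodule R M} {N : Submodule R M}
    (h : ∀ s ∈ p, ∀ m ∈ q, s • m ∈ N) : p.algSMul q ≤ N := by
  rw [Submodule.algSMul, Submodule.span_le]
  rintro x ⟨s, hs, m, hm, rfl⟩
  exact h s hs m hm

theorem algSMul_mono {p p' : Submodule R A} (q : Submodule R M) (h : p ≤ p') :
    p.algSMul q ≤ p'.algSMul q :=
  algSMul_le fun s hs m hm => smul_mem_algSMul (h hs) hm

theorem algSMul_one (q : Submodule R M) : Submodule.algSMul (1 : Submodule R A) q = q := by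
  apply le_antisymm
  · apply algSMul_le
    intro s hs m hm
    rw [Submodule.one_eq_range] at hs
    obtain ⟨r, rfl⟩ := hs
    rw [Algebra.linearMap_apply, algebraMap_smul]
    exact q.smul_mem r hm
  · intro m hm
    have h1 : (1 : A) ∈ (1 : Submodule R A) := by
      rw [Submodule.one_eq_range]; exact ⟨1, by simp⟩
    simpa using smul_mem_algSMul h1 hm

theorem algSMul_mul (p p' : Submodule R A) (q : Submodule R M) :
    (p * p').algSMul q = p.algSMul (p'.algSMul q) := by
  apply le_antisymm
  · apply algSMul_le
    intro s hs m hm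
    refine Submodule.mul_induction_on hs (fun a ha b hb => ?_) (fun x y hx hy => ?_)
    · rw [mul_smul]
      exact smul_mem_algSMul ha (smul_mem_algSMul hb hm)
    · rw [add_smul]; exact add_mem hx hy
  · apply algSMul_le
    intro s hs y hy
    induction hy using Submodule.span_induction with
    | mem v hv =>
        obtain ⟨s', hs', m, hm, rfl⟩ := hv
        rw [← mul_smul]
        exact smul_mem_algSMul (Submodule.mul_mem_mul hs hs') hm
    | zero => rw [smul_zero]; exact zero_mem _
    | add x y hx hy ihx ihy => rw [smul_add]; exact add_mem ihx ihy
    | smul r x hx ih => rw [smul_comm]; exact Submodule.smul_mem _ r ih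

variable (𝒜 : ℕ → Submodule R A) (ℳ : ℕ → Submodule R M)

theorem pow_le_graded [SetLike.GradedMonoid 𝒜] (h𝒜₀ : 𝒜 0 = 1) (a n : ℕ) :
    (𝒜 a) ^ n ≤ 𝒜 (a * n) := by
  induction n with
  | zero => rw [pow_zero, Nat.mul_zero, h𝒜₀]
  | succ n ih =>
      rw [pow_succ]
      refine Submodule.mul_le.mpr fun x hx y hy => ?_
      have h := SetLike.mul_mem_graded (ih hx) hy
      have he : a * n + a = a * (n + 1) := by ring
      rwa [he] at h

theorem algSMul_graded [SetLike.GradedSMul 𝒜 ℳ] {p : Submodule R A} {i j : ℕ} (hp : p ≤ 𝒜 i) :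
    p.algSMul (ℳ j) ≤ ℳ (i + j) :=
  algSMul_le fun s hs m hm => SetLike.GradedSMul.smul_mem (hp hs) hm

theorem multiset_prod_graded [SetLike.GradedMonoid 𝒜] (l : Multiset (A × ℕ))
    (hl : ∀ p ∈ l, p.1 ∈ 𝒜 p.2) :
    (l.map Prod.fst).prod ∈ 𝒜 ((l.map Prod.snd).sum) := by
  induction l using Multiset.induction_on with
  | empty => simpa using SetLike.one_mem_graded 𝒜
  | cons p l ih =>
      rw [Multiset.map_cons, Multiset.map_cons, Multiset.prod_cons, Multiset.sum_cons]
      exact SetLike.mul_mem_graded (hl p (Multiset.mem_cons_self p l))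
        (ih fun q hq => hl q (Multiset.mem_cons_of_mem hq))

theorem closure_multiset (B : Finset (A × ℕ)) {w : A}
    (hw : w ∈ Submonoid.closure (Prod.fst '' (↑B : Set (A × ℕ)))) :
    ∃ l : Multiset (A × ℕ), (∀ p ∈ l, p ∈ B) ∧ (l.map Prod.fst).prod = w := by
  induction hw using Submonoid.closure_induction with
  | mem x hx =>
      obtain ⟨p, hp, rfl⟩ := hx
      exact ⟨{p}, by simpa using hp, by simp⟩
  | one => exact ⟨0, by simp, by simp⟩
  | mul x y hx hy ihx ihy =>
      obtain ⟨l₁, h₁, e₁⟩ := ihx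
      obtain ⟨l₂, h₂, e₂⟩ := ihy
      refine ⟨l₁ + l₂, fun p hp => ?_, ?_⟩
      · rcases Multiset.mem_add.mp hp with h | h
        exacts [h₁ p h, h₂ p h]
      · rw [Multiset.map_add, Multiset.prod_add, e₁, e₂]

variable {R A M : Type*} [CommRing R] [CommRing A] [Algebra R A]
    [AddCommGroup M] [Module R M] [Module A M] [IsScalarTower R A M]
variable (𝒜 : ℕ → Submodule R A) (ℳ : ℕ → Submodule R M)

theorem mem_span_inter_of_homog [DirectSum.Decomposition ℳ] (k : ℕ) (X : Set M)
    (hX : ∀ v ∈ X, ∃ i, v ∈ ℳ i) {m : M} (hm : m ∈ ℳ k) (hms : m ∈ Submodule.span R X) :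
    m ∈ Submodule.span R (X ∩ (ℳ k : Set M)) := by
  classical
  let P : M →ₗ[R] M :=
    (ℳ k).subtype ∘ₗ (DFinsupp.lapply k) ∘ₗ (DirectSum.decomposeLinearEquiv ℳ).toLinearMap
  have hP : ∀ v : M, P v = (DirectSum.decompose ℳ v k : M) := fun v => rfl
  have h1 : P m ∈ Submodule.map P (Submodule.span R X) := Submodule.mem_map_of_mem hms
  rw [Submodule.map_span] at h1
  have h2 : P m = m := by rw [hP]; exact DirectSum.decompose_of_mem_same ℳ hm
  rw [h2] at h1
  have h3 : Submodule.span R (P '' X) ≤ Submodule.span R (X ∩ (ℳ k : Set M)) := by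
    rw [Submodule.span_le]
    rintro y ⟨v, hvX, rfl⟩
    obtain ⟨i, hvi⟩ := hX v hvX
    by_cases hik : i = k
    · subst hik
      have : P v = v := by rw [hP]; exact DirectSum.decompose_of_mem_same ℳ hvi
      rw [this]
      exact Submodule.subset_span ⟨hvX, hvi⟩
    · have : P v = 0 := by
        rw [hP]
        exact DirectSum.decompose_of_mem_ne ℳ hvi hik
      rw [this]
      exact zero_mem _
  exact h3 h1

theorem extract_lemma [SetLike.GradedMonoid 𝒜] (B : Finset (A × ℕ)) {e : ℕ}
    (hB : ∀ p ∈ B, p.1 ∈ 𝒜 p.2 ∧ 0 < p.2 ∧ p.2 ∣ e)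
    (l : Multiset (A × ℕ)) (hl : ∀ p ∈ l, p ∈ B)
    (hsum : B.card * (e - 1) < (l.map Prod.snd).sum) :
    ∃ (x : A) (u : Multiset (A × ℕ)), (∀ p ∈ u, p ∈ B) ∧ x ∈ 𝒜 e ∧
      (l.map Prod.fst).prod = x * (u.map Prod.fst).prod ∧
      (l.map Prod.snd).sum = e + (u.map Prod.snd).sum := by
  classical
  have hpigeon : ∃ p ∈ B, e ≤ l.count p * p.2 := by
    by_contra hcon
    push_neg at hcon
    have h1 : (l.map Prod.snd).sum = ∑ p ∈ l.toFinset, l.count p • p.2 :=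
      Finset.sum_multiset_map_count l Prod.snd
    have h2 : ∑ p ∈ l.toFinset, l.count p • p.2 ≤ ∑ p ∈ B, l.count p • p.2 :=
      Finset.sum_le_sum_of_subset fun p hp => hl p (Multiset.mem_toFinset.mp hp)
    have h3 : ∑ p ∈ B, l.count p • p.2 ≤ B.card * (e - 1) := by
      have := Finset.sum_le_card_nsmul B (fun p => l.count p • p.2) (e - 1)
        (fun p hp => by have := hcon p hp; simp only [smul_eq_mul]; omega)
      simpa using this
    omega
  obtain ⟨p, hpB, hpe⟩ := hpigeon
  obtain ⟨hp𝒜, hppos, hpdvd⟩ := hB p hpB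
  have hce : e / p.2 * p.2 = e := Nat.div_mul_cancel hpdvd
  have hcc : e / p.2 ≤ l.count p := by
    have h : e / p.2 * p.2 ≤ l.count p * p.2 := by rw [hce]; exact hpe
    exact Nat.le_of_mul_le_mul_right h hppos
  have hrep : Multiset.replicate (e / p.2) p ≤ l := Multiset.le_count_iff_replicate_le.mp hcc
  have hu : Multiset.replicate (e / p.2) p + (l - Multiset.replicate (e / p.2) p) = l :=
    add_tsub_cancel_of_le hrep
  refine ⟨p.1 ^ (e / p.2), l - Multiset.replicate (e / p.2) p, ?_, ?_, ?_, ?_⟩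
  · intro q hq
    exact hl q (Multiset.mem_of_le (Multiset.sub_le_self _ _) hq)
  · have h := SetLike.pow_mem_graded (e / p.2) hp𝒜
    rwa [smul_eq_mul, hce] at h
  · conv_lhs => rw [← hu]
    rw [Multiset.map_add, Multiset.prod_add, Multiset.map_replicate, Multiset.prod_replicate]
  · conv_lhs => rw [← hu]
    rw [Multiset.map_add, Multiset.sum_add, Multiset.map_replicate, Multiset.sum_replicate,
      smul_eq_mul, hce]

theorem span_monomials (B : Finset (A × ℕ)) (C : Finset (M × ℕ))
    (hAgen : Algebra.adjoin R (Prod.fst '' (↑B : Set (A × ℕ))) = ⊤)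
    (hMgen : Submodule.span A (Prod.fst '' (↑C : Set (M × ℕ))) = ⊤) (m : M) :
    m ∈ Submodule.span R
      {v : M | ∃ w ∈ Submonoid.closure (Prod.fst '' (↑B : Set (A × ℕ))), ∃ p ∈ C, v = w • p.1} := by
  set X : Set M :=
    {v : M | ∃ w ∈ Submonoid.closure (Prod.fst '' (↑B : Set (A × ℕ))), ∃ p ∈ C, v = w • p.1}
    with hXdef
  have hcl : ∀ w ∈ Submonoid.closure (Prod.fst '' (↑B : Set (A × ℕ))),
      ∀ v ∈ Submodule.span R X, w • v ∈ Submodule.span R X := by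
    intro w hw v hv
    induction hv using Submodule.span_induction with
    | mem v hv =>
        obtain ⟨w', hw', p, hp, rfl⟩ := hv
        rw [← mul_smul]
        exact Submodule.subset_span ⟨w * w', mul_mem hw hw', p, hp, rfl⟩
    | zero => rw [smul_zero]; exact zero_mem _
    | add x y _ _ ihx ihy => rw [smul_add]; exact add_mem ihx ihy
    | smul r x _ ih => rw [smul_comm]; exact Submodule.smul_mem _ r ih
  have hstable : ∀ a : A, ∀ v ∈ Submodule.span R X, a • v ∈ Submodule.span R X := by
    intro a v hv
    have ha : a ∈ Submodule.span R
        ((Submonoid.closure (Prod.fst '' (↑B : Set (A × ℕ)))) : Set A) := by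
      have h : a ∈ Subalgebra.toSubmodule (Algebra.adjoin R (Prod.fst '' (↑B : Set (A × ℕ)))) := by
        rw [hAgen]; exact Submodule.mem_top
      rwa [Algebra.adjoin_eq_span] at h
    induction ha using Submodule.span_induction with
    | mem w hwc => exact hcl w hwc v hv
    | zero => rw [zero_smul]; exact zero_mem _
    | add x y _ _ ihx ihy => rw [add_smul]; exact add_mem ihx ihy
    | smul r x _ ih => rw [smul_assoc]; exact Submodule.smul_mem _ r ih
  have hm : m ∈ (⊤ : Submodule A M) := Submodule.mem_top
  rw [← hMgen] at hm
  induction hm using Submodule.span_induction with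
  | mem v hv =>
      obtain ⟨p, hp, rfl⟩ := hv
      exact Submodule.subset_span ⟨1, one_mem _, p, hp, (one_smul A p.1).symm⟩
  | zero => exact zero_mem _
  | add x y _ _ ihx ihy => exact add_mem ihx ihy
  | smul a x _ ih => exact hstable a x ih

end StmtAux


/-- Let `R` be a commutative ring, `A = ⊕ₙ Aₙ` a finitely generated graded
`R`-algebra with `A₀ = R`, and `M = ⊕ₙ Mₙ` a finitely generated graded `A`-module.  Then there
is an integer `a ≥ 1` such that `M_{a n + r} = A_a ^ (n - 1) · M_{a + r}` for all `n ≥ 1` and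
all `0 ≤ r ≤ a - 1`. -/
theorem stmt0 {R A M : Type*} [CommRing R] [CommRing A] [Algebra R A]
    [AddCommGroup M] [Module R M] [Module A M] [IsScalarTower R A M]
    (𝒜 : ℕ → Submodule R A) [GradedAlgebra 𝒜]
    (h𝒜₀ : 𝒜 0 = (1 : Submodule R A))
    (hA : Algebra.FiniteType R A)
    (ℳ : ℕ → Submodule R M) [SetLike.GradedSMul 𝒜 ℳ] [DirectSum.Decomposition ℳ]
    (hM : Module.Finite A M) :
    ∃ a : ℕ, 1 ≤ a ∧ ∀ n : ℕ, 1 ≤ n → ∀ r : ℕ, r ≤ a - 1 →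
      ℳ (a * n + r) = Submodule.algSMul ((𝒜 a) ^ (n - 1)) (ℳ (a + r)) := by
  classical
  open StmtAux in
  obtain ⟨T, hT⟩ := hA.out
  obtain ⟨G, hG⟩ := hM.fg_top
  -- homogeneous generators of A of positive degree
  set B : Finset (A × ℕ) := T.biUnion fun t =>
    ((DFinsupp.support (DirectSum.decompose 𝒜 t)).filter fun i => 0 < i).image
      fun i => ((DirectSum.decompose 𝒜 t i : A), i) with hBdef
  have hB : ∀ p ∈ B, p.1 ∈ 𝒜 p.2 ∧ 0 < p.2 := by
    intro p hp
    simp only [hBdef, Finset.mem_biUnion, Finset.mem_image, Finset.mem_filter] at hp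
    obtain ⟨t, ht, i, ⟨hisup, hipos⟩, rfl⟩ := hp
    exact ⟨SetLike.coe_mem _, hipos⟩
  have hAgen : Algebra.adjoin R (Prod.fst '' (↑B : Set (A × ℕ))) = ⊤ := by
    rw [← top_le_iff, ← hT]
    rw [Algebra.adjoin_le_iff]
    intro t ht
    show t ∈ Algebra.adjoin R (Prod.fst '' (↑B : Set (A × ℕ)))
    rw [← DirectSum.sum_support_decompose 𝒜 t]
    refine Subalgebra.sum_mem _ fun i hi => ?_
    by_cases hi0 : i = 0
    · subst hi0
      have h0 : (DirectSum.decompose 𝒜 t 0 : A) ∈ (1 : Submodule R A) := by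
        rw [← h𝒜₀]; exact SetLike.coe_mem _
      rw [Submodule.one_eq_range] at h0
      obtain ⟨r, hr⟩ := h0
      rw [← hr]
      exact Subalgebra.algebraMap_mem _ r
    · apply Algebra.subset_adjoin
      refine ⟨((DirectSum.decompose 𝒜 t i : A), i), ?_, rfl⟩
      rw [Finset.mem_coe, hBdef, Finset.mem_biUnion]
      exact ⟨t, Finset.mem_coe.mp ht, Finset.mem_image.mpr
        ⟨i, Finset.mem_filter.mpr ⟨hi, Nat.pos_of_ne_zero hi0⟩, rfl⟩⟩
  -- homogeneous generators of M
  set C : Finset (M × ℕ) := G.biUnion fun g =>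
    (DFinsupp.support (DirectSum.decompose ℳ g)).image
      fun j => ((DirectSum.decompose ℳ g j : M), j) with hCdef
  have hC : ∀ p ∈ C, p.1 ∈ ℳ p.2 := by
    intro p hp
    simp only [hCdef, Finset.mem_biUnion, Finset.mem_image] at hp
    obtain ⟨g, hg, j, hj, rfl⟩ := hp
    exact SetLike.coe_mem _
  have hMgen : Submodule.span A (Prod.fst '' (↑C : Set (M × ℕ))) = ⊤ := by
    rw [← top_le_iff, ← hG, Submodule.span_le]
    intro g hg
    show g ∈ Submodule.span A (Prod.fst '' (↑C : Set (M × ℕ)))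
    rw [← DirectSum.sum_support_decompose ℳ g]
    refine Submodule.sum_mem _ fun j hj => Submodule.subset_span ?_
    refine ⟨((DirectSum.decompose ℳ g j : M), j), ?_, rfl⟩
    rw [Finset.mem_coe, hCdef, Finset.mem_biUnion]
    exact ⟨g, Finset.mem_coe.mp hg, Finset.mem_image.mpr ⟨j, hj, rfl⟩⟩
  -- the degree bookkeeping
  obtain ⟨e, he, hdvd⟩ : ∃ e, 0 < e ∧ ∀ p ∈ B, p.2 ∣ e := by
    refine ⟨B.lcm Prod.snd, ?_, fun p hp => Finset.dvd_lcm hp⟩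
    rw [Nat.pos_iff_ne_zero]
    intro h0
    rw [Finset.lcm_eq_zero_iff] at h0
    obtain ⟨p, hp, hp0⟩ := h0
    exact absurd ((hB p hp).2) (by omega)
  obtain ⟨E, hE⟩ : ∃ E, ∀ p ∈ C, p.2 ≤ E := ⟨C.sup Prod.snd, fun p hp => Finset.le_sup hp⟩
  obtain ⟨N, hN⟩ : ∃ N : ℕ, B.card * (e - 1) + E + 1 ≤ N := ⟨_, le_rfl⟩
  -- the set of homogeneous monomials
  set X : Set M :=
    {v : M | ∃ w ∈ Submonoid.closure (Prod.fst '' (↑B : Set (A × ℕ))), ∃ p ∈ C, v = w • p.1}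
    with hXdef
  have hXhom : ∀ v ∈ X, ∃ i, v ∈ ℳ i := by
    rintro v ⟨w, hw, p, hpC, rfl⟩
    obtain ⟨l, hlB, rfl⟩ := closure_multiset B hw
    exact ⟨_, SetLike.GradedSMul.smul_mem
      (multiset_prod_graded 𝒜 l fun q hq => (hB q (hlB q hq)).1) (hC p hpC)⟩
  -- the key one-step lemma
  have L1 : ∀ k, N ≤ k → ℳ (k + e) = Submodule.algSMul (𝒜 e) (ℳ k) := by
    intro k hk
    apply le_antisymm
    · intro m hm
      have hms := span_monomials B C hAgen hMgen m
      have hinter := mem_span_inter_of_homog ℳ (k + e) X hXhom hm hms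
      refine Submodule.span_le.mpr ?_ hinter
      rintro v ⟨⟨w, hw, p, hpC, rfl⟩, hvk⟩
      by_cases h0 : w • p.1 = 0
      · rw [h0]; exact zero_mem _
      obtain ⟨l, hlB, rfl⟩ := closure_multiset B hw
      have hwdeg := multiset_prod_graded 𝒜 l fun q hq => (hB q (hlB q hq)).1
      have hvdeg : (l.map Prod.fst).prod • p.1 ∈ ℳ ((l.map Prod.snd).sum + p.2) :=
        SetLike.GradedSMul.smul_mem hwdeg (hC p hpC)
      have hdeq : (l.map Prod.snd).sum + p.2 = k + e :=
        DirectSum.degree_eq_of_mem_mem ℳ hvdeg hvk h0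
      have hpE : p.2 ≤ E := hE p hpC
      have hkey : B.card * (e - 1) < (l.map Prod.snd).sum := by
        have h1 : B.card * (e - 1) + E + 1 ≤ N := hN
        generalize B.card * (e - 1) = P at h1 ⊢
        omega
      obtain ⟨x, u, huB, hx, hprod, hsumu⟩ :=
        extract_lemma 𝒜 B (fun q hq => ⟨(hB q hq).1, (hB q hq).2, hdvd q hq⟩) l hlB hkey
      rw [hprod, mul_smul]
      refine smul_mem_algSMul hx ?_
      have humem : (u.map Prod.fst).prod • p.1 ∈ ℳ ((u.map Prod.snd).sum + p.2) :=
        SetLike.GradedSMul.smul_mem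
          (multiset_prod_graded 𝒜 u fun q hq => (hB q (huB q hq)).1) (hC p hpC)
      have hk2 : (u.map Prod.snd).sum + p.2 = k := by omega
      rwa [hk2] at humem
    · have h := algSMul_graded 𝒜 ℳ (le_refl (𝒜 e)) (j := k)
      rwa [Nat.add_comm] at h
  -- iterate
  have L2 : ∀ q k, N ≤ k → ℳ (k + e * q) = Submodule.algSMul ((𝒜 e) ^ q) (ℳ k) := by
    intro q
    induction q with
    | zero => intro k hk; rw [Nat.mul_zero, Nat.add_zero, pow_zero, algSMul_one]
    | succ q ih =>
        intro k hk
        have h1 : k + e * (q + 1) = (k + e * q) + e := by ring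
        rw [h1, L1 (k + e * q) (le_trans hk (Nat.le_add_right _ _)), ih k hk,
          ← algSMul_mul, pow_succ']
  -- conclusion
  refine ⟨e * (N + 1), Nat.mul_pos he (Nat.succ_pos N), ?_⟩
  intro n hn r _
  induction n, hn using Nat.le_induction with
  | base => simp only [Nat.mul_one, Nat.sub_self, pow_zero, algSMul_one]
  | succ n hn ih =>
      have ha1 : N ≤ e * (N + 1) * n + r := by
        have h1 : N + 1 ≤ e * (N + 1) := by
          calc N + 1 = 1 * (N + 1) := (one_mul _).symm
            _ ≤ e * (N + 1) := Nat.mul_le_mul_right _ he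
        have h2 : e * (N + 1) ≤ e * (N + 1) * n := Nat.le_mul_of_pos_right _ hn
        omega
      have heq : e * (N + 1) * (n + 1) + r = (e * (N + 1) * n + r) + e * (N + 1) := by ring
      have hL2 := L2 (N + 1) (e * (N + 1) * n + r) ha1
      apply le_antisymm
      · have hchain : ℳ (e * (N + 1) * (n + 1) + r) =
            Submodule.algSMul ((𝒜 e) ^ (N + 1) * (𝒜 (e * (N + 1))) ^ (n - 1))
              (ℳ (e * (N + 1) + r)) := by
          rw [heq, hL2, ih, algSMul_mul]
        rw [hchain]
        apply algSMul_mono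
        have hp1 : (𝒜 e) ^ (N + 1) ≤ 𝒜 (e * (N + 1)) := pow_le_graded 𝒜 h𝒜₀ e (N + 1)
        refine (mul_le_mul' hp1 le_rfl).trans ?_
        have hnn : n + 1 - 1 = (n - 1) + 1 := by omega
        rw [hnn, pow_succ']
      · have h := algSMul_graded 𝒜 ℳ
          (pow_le_graded 𝒜 h𝒜₀ (e * (N + 1)) (n + 1 - 1)) (j := e * (N + 1) + r)
        have harith : e * (N + 1) * (n + 1 - 1) + (e * (N + 1) + r) =
            e * (N + 1) * (n + 1) + r := by
          rw [Nat.add_sub_cancel]; ring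
        rwa [harith] at h
end

section
/- Let R = K[X,Y] be the polynomial ring in two variables over a field K. Define J′_0 = R and J′_n = ⟨X^a Y^b : ab ≥ n², a ≥ n⟩ for all n ≥ 1. Then 𝓙′ = {J′_n}_{n∈ℕ} is a filtration of R by monomial ideals, and X·J′_n ⊆ (X^{n²} Y) + Σ_{t=1}^{n-1} J′_t J′_{n-t} ⊆ J′_n for all n ≥ 2. -/
/-- A monomial ideal of `K[X,Y]`: an ideal generated by monomials `X^a Y^b`. -/
def IsMonomialIdeal2 {K : Type*} [Field K] (J : Ideal (MvPolynomial (Fin 2) K)) : Prop :=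
  ∃ S : Set (ℕ × ℕ),
    J = Ideal.span
      ((fun ab : ℕ × ℕ =>
          (MvPolynomial.X 0 : MvPolynomial (Fin 2) K) ^ ab.1 * MvPolynomial.X 1 ^ ab.2) '' S)

private lemma stmt17_aux1 (n a b t : ℤ) (hn : 2 ≤ n) (ha : n ≤ a) (hab : n^2 ≤ a*b)
    (hb : 2 ≤ b) (ht1 : 1 ≤ t) (htn : t ≤ n-1) (htb : n ≤ t*b) (htb' : (t-1)*b ≤ n-1) :
    t^2 + (n - t) ≤ a + 1 := by
  rcases eq_or_lt_of_le ht1 with h | h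
  · nlinarith
  · have ht2 : 2 ≤ t := h
    have hbn : b ≤ n - 1 := by nlinarith
    nlinarith [mul_nonneg (by linarith : (0:ℤ) ≤ b - 2) (by linarith : (0:ℤ) ≤ n - 1 - b),
      mul_le_mul_of_nonneg_left htb' (by linarith : (0:ℤ) ≤ t),
      mul_le_mul_of_nonneg_right hab (by linarith : (0:ℤ) ≤ b),
      mul_pos (by linarith : (0:ℤ) < b) (by linarith : (0:ℤ) < b)]

private lemma stmt17_aux2 (n a b t : ℤ) (hn : 2 ≤ n) (ha : n ≤ a) (hab : n^2 ≤ a*b)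
    (hb : 2 ≤ b) (ht1 : 1 ≤ t) (htn : t ≤ n-1) (htb : n ≤ t*b) (htb' : (t-1)*b ≤ n-1) :
    (n-t)^2 ≤ (a+1-t^2)*(b-1) := by
  nlinarith [sq_nonneg (t*b - n), mul_le_mul_of_nonneg_right htb' (by linarith : (0:ℤ) ≤ b),
    mul_le_mul_of_nonneg_right hab (by linarith : (0:ℤ) ≤ b-1),
    mul_le_mul_of_nonneg_right htb (by linarith : (0:ℤ) ≤ b),
    sq_nonneg (t*b - n - b + 1)]

private lemma stmt17_aux3 (n k a b c d : ℤ) (ha : 0 ≤ a) (hb : 0 ≤ b) (hc : 0 ≤ c)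
    (hd : 0 ≤ d) (hn : 0 ≤ n) (hk : 0 ≤ k) (hab : n^2 ≤ a*b) (hcd : k^2 ≤ c*d) :
    (n+k)^2 ≤ (a+c)*(b+d) := by
  have h1 : n^2*k^2 ≤ (a*b)*(c*d) := by
    have := mul_le_mul hab hcd (by positivity) (by nlinarith)
    linarith
  have h2 : (2*(n*k))^2 ≤ (a*d+c*b)^2 := by nlinarith [sq_nonneg (a*d - c*b)]
  have h3 : 2*(n*k) ≤ a*d+c*b := by
    have hnk : 0 ≤ 2*(n*k) := by positivity
    have had : 0 ≤ a*d + c*b := by positivity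
    nlinarith
  nlinarith

set_option maxHeartbeats 2000000 in
open MvPolynomial in
/-- Let `R = K[X,Y]`.  Define `J′₀ = R` and
`J′ₙ = ⟨X^a Y^b : a b ≥ n², a ≥ n⟩` for `n ≥ 1`.  Then `𝓙′ = {J′ₙ}ₙ` is a filtration of `R`
by monomial ideals, and `X·J′ₙ ⊆ (X^{n²} Y) + Σ_{t=1}^{n-1} J′ₜ J′_{n−t} ⊆ J′ₙ` for all
`n ≥ 2`. -/
theorem stmt17 {K : Type*} [Field K]
    (J' : ℕ → Ideal (MvPolynomial (Fin 2) K))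
    (hJ0 : J' 0 = ⊤)
    (hJn : ∀ n : ℕ, 1 ≤ n →
      J' n = Ideal.span
        {f : MvPolynomial (Fin 2) K | ∃ a b : ℕ, n ^ 2 ≤ a * b ∧ n ≤ a ∧
          f = (MvPolynomial.X 0 : MvPolynomial (Fin 2) K) ^ a * MvPolynomial.X 1 ^ b}) :
    ((∀ n k : ℕ, J' n * J' k ≤ J' (n + k)) ∧ (∀ n : ℕ, J' (n + 1) ≤ J' n) ∧
      (∀ n, IsMonomialIdeal2 (J' n))) ∧
    ∀ n : ℕ, 2 ≤ n →
      Ideal.span {(MvPolynomial.X 0 : MvPolynomial (Fin 2) K)} * J' n ≤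
        Ideal.span {(MvPolynomial.X 0 : MvPolynomial (Fin 2) K) ^ (n ^ 2) *
            MvPolynomial.X 1} +
          ∑ t ∈ Finset.Ico 1 n, J' t * J' (n - t) ∧
      Ideal.span {(MvPolynomial.X 0 : MvPolynomial (Fin 2) K) ^ (n ^ 2) *
          MvPolynomial.X 1} +
        ∑ t ∈ Finset.Ico 1 n, J' t * J' (n - t) ≤ J' n := by
  -- generators are members
  have hgen : ∀ n : ℕ, 1 ≤ n → ∀ a b : ℕ, n ^ 2 ≤ a * b → n ≤ a →
      (X 0 : MvPolynomial (Fin 2) K) ^ a * X 1 ^ b ∈ J' n := by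
    intro n hn a b h1 h2
    rw [hJn n hn]
    exact Ideal.subset_span ⟨a, b, h1, h2, rfl⟩
  -- graded family
  have hA : ∀ n k : ℕ, J' n * J' k ≤ J' (n + k) := by
    intro n k
    rcases Nat.eq_zero_or_pos n with rfl | hn
    · simpa using Ideal.mul_le_right (I := J' 0)
    rcases Nat.eq_zero_or_pos k with rfl | hk
    · simpa using Ideal.mul_le_left (J := J' 0)
    · rw [hJn n hn, hJn k hk, Ideal.span_mul_span', hJn (n+k) (by omega)]
      apply Ideal.span_le.2
      rintro f hf
      obtain ⟨u, hu, v, hv, rfl⟩ := Set.mem_mul.1 hf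
      obtain ⟨a, b, hab, hna, rfl⟩ := hu
      obtain ⟨c, d, hcd, hkc, rfl⟩ := hv
      refine Ideal.subset_span ⟨a+c, b+d, ?_, by omega, by ring⟩
      have : ((n:ℤ)+k)^2 ≤ ((a:ℤ)+c)*((b:ℤ)+d) := by
        refine stmt17_aux3 n k a b c d (by positivity) (by positivity) (by positivity)
          (by positivity) (by positivity) (by positivity) ?_ ?_ <;> exact_mod_cast ‹_›
      exact_mod_cast this
  refine ⟨⟨hA, ?_, ?_⟩, ?_⟩
  · -- filtration
    intro n
    rcases Nat.eq_zero_or_pos n with rfl | hn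
    · rw [hJ0]; exact le_top
    · rw [hJn (n+1) (by omega), hJn n hn]
      apply Ideal.span_le.2
      rintro f ⟨a, b, h1, h2, rfl⟩
      refine Ideal.subset_span ⟨a, b, le_trans ?_ h1, by omega, rfl⟩
      exact Nat.pow_le_pow_left (by omega) 2
  · -- monomial ideals
    intro n
    rcases Nat.eq_zero_or_pos n with rfl | hn
    · refine ⟨{(0,0)}, ?_⟩
      rw [hJ0, Set.image_singleton]
      simp
    · refine ⟨{p : ℕ × ℕ | n ^ 2 ≤ p.1 * p.2 ∧ n ≤ p.1}, ?_⟩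
      rw [hJn n hn]
      congr 1
      ext f
      constructor
      · rintro ⟨a, b, h1, h2, rfl⟩
        exact ⟨(a, b), ⟨h1, h2⟩, rfl⟩
      · rintro ⟨⟨a, b⟩, ⟨h1, h2⟩, rfl⟩
        exact ⟨a, b, h1, h2, rfl⟩
  · -- the two inclusions
    intro n hn
    have hn1 : 1 ≤ n := by omega
    constructor
    · -- X · J'ₙ ⊆ (X^{n²} Y) + ∑ ...
      rw [hJn n hn1, Ideal.span_mul_span']
      apply Ideal.span_le.2
      rintro f hf
      obtain ⟨u, hu, v, hv, rfl⟩ := Set.mem_mul.1 hf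
      rw [Set.mem_singleton_iff] at hu
      subst hu
      obtain ⟨a, b, hab, hna, rfl⟩ := hv
      have hn2 : 4 ≤ n ^ 2 := by nlinarith
      have hb1 : 1 ≤ b := by
        rcases Nat.eq_zero_or_pos b with rfl | h
        · rw [Nat.mul_zero] at hab; omega
        · exact h
      by_cases hcase : n ^ 2 ≤ a + 1
      · -- divisible by X^{n²} Y
        obtain ⟨a2, ha2⟩ := Nat.exists_eq_add_of_le hcase
        obtain ⟨b2, hb2⟩ := Nat.exists_eq_add_of_le hb1
        refine Submodule.mem_sup_left (Ideal.mem_span_singleton.2 ⟨X 0 ^ a2 * X 1 ^ b2, ?_⟩)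
        have h : (X 0 : MvPolynomial (Fin 2) K) * (X 0 ^ a * X 1 ^ b) =
            X 0 ^ (a+1) * X 1 ^ b := by ring
        rw [h, ha2, hb2]
        ring
      · -- product of two generators
        have hb2' : 2 ≤ b := by
          by_contra h
          interval_cases b <;> omega
        set q := (n-1)/b with hq
        set t := q + 1 with htdef
        have hdm : b * q + (n-1) % b = n - 1 := by rw [hq]; exact Nat.div_add_mod (n-1) b
        have hmod : (n-1) % b < b := Nat.mod_lt _ (by omega)
        have htbeq : t * b = b * q + b := by ring
        have htb : n ≤ t * b := by
          rw [htbeq]; omega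
        have htb' : q * b ≤ n - 1 := by
          rw [show q * b = b * q from Nat.mul_comm q b]; omega
        have h2q : 2 * q ≤ n - 1 := by
          have h : 2 * q ≤ b * q := Nat.mul_le_mul_right q hb2'
          omega
        have htn : t ≤ n - 1 := by omega
        -- integer versions of the hypotheses
        have hZtb' : ((t:ℤ) - 1) * b ≤ (n:ℤ) - 1 := by
          have h1 : ((t:ℤ) - 1) * b = (q:ℤ) * b := by push_cast [htdef]; ring
          rw [h1]
          have h2 := htb'
          zify [hn1] at h2
          exact h2
        have hZ1 : (t:ℤ)^2 + ((n:ℤ) - t) ≤ (a:ℤ) + 1 :=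
          stmt17_aux1 n a b t (by exact_mod_cast hn) (by exact_mod_cast hna)
            (by exact_mod_cast hab) (by exact_mod_cast hb2') (by push_cast; omega)
            (by push_cast; omega) (by exact_mod_cast htb) hZtb'
        have hZ2 : ((n:ℤ) - t)^2 ≤ ((a:ℤ) + 1 - (t:ℤ)^2) * ((b:ℤ) - 1) :=
          stmt17_aux2 n a b t (by exact_mod_cast hn) (by exact_mod_cast hna)
            (by exact_mod_cast hab) (by exact_mod_cast hb2') (by push_cast; omega)
            (by push_cast; omega) (by exact_mod_cast htb) hZtb'
        have htZn : (t:ℤ) ≤ (n:ℤ) := by push_cast; omega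
        have ht2a : t^2 ≤ a + 1 := by
          have h : (t:ℤ)^2 ≤ (a:ℤ) + 1 := by linarith
          exact_mod_cast h
        obtain ⟨s, hs⟩ := Nat.exists_eq_add_of_le (show t ≤ n by omega)
        obtain ⟨a2, ha2⟩ := Nat.exists_eq_add_of_le ht2a
        obtain ⟨b3, hb3⟩ := Nat.exists_eq_add_of_le (show 1 ≤ b by omega)
        have hcast1 : (n:ℤ) = (t:ℤ) + s := by exact_mod_cast hs
        have hcast2 : (a:ℤ) + 1 = (t:ℤ)^2 + a2 := by exact_mod_cast ha2
        have hcast3 : (b:ℤ) = 1 + b3 := by exact_mod_cast hb3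
        have hs1 : 1 ≤ s := by omega
        have hs2 : s ≤ a2 := by
          have h : (s:ℤ) ≤ (a2:ℤ) := by linarith
          exact_mod_cast h
        have hs3 : s^2 ≤ a2 * b3 := by
          have e1 : (n:ℤ) - (t:ℤ) = (s:ℤ) := by linarith
          have e2 : (a:ℤ) + 1 - (t:ℤ)^2 = (a2:ℤ) := by linarith
          have e3 : (b:ℤ) - 1 = (b3:ℤ) := by linarith
          rw [e1, e2, e3] at hZ2
          exact_mod_cast hZ2
        have hf1 : (X 0 : MvPolynomial (Fin 2) K) ^ (t^2) * X 1 ^ 1 ∈ J' t :=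
          hgen t (by omega) (t^2) 1 (by simp) (Nat.le_self_pow two_ne_zero t)
        have hf2 : (X 0 : MvPolynomial (Fin 2) K) ^ a2 * X 1 ^ b3 ∈ J' s :=
          hgen s hs1 a2 b3 hs3 hs2
        have hmul := Ideal.mul_mem_mul hf1 hf2
        have heq : (X 0 : MvPolynomial (Fin 2) K) * (X 0 ^ a * X 1 ^ b) =
            (X 0 ^ (t^2) * X 1 ^ 1) * (X 0 ^ a2 * X 1 ^ b3) := by
          have h1 : (X 0 : MvPolynomial (Fin 2) K) * (X 0 ^ a * X 1 ^ b) =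
              X 0 ^ (a+1) * X 1 ^ b := by ring
          rw [h1, ha2, hb3]; ring
        refine Submodule.mem_sup_right ?_
        have htmem : t ∈ Finset.Ico 1 n := Finset.mem_Ico.2 ⟨by omega, by omega⟩
        rw [Finset.sum_eq_sum_sdiff_singleton_add htmem, Submodule.add_eq_sup]
        refine Submodule.mem_sup_right ?_
        have hnt : n - t = s := by omega
        rw [hnt, heq]
        exact hmul
    · -- (X^{n²} Y) + ∑ ... ⊆ J'ₙ
      apply sup_le
      · apply Ideal.span_le.2
        rintro f rfl
        simpa using hgen n hn1 (n^2) 1 (by simp) (Nat.le_self_pow two_ne_zero n)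
      · refine Finset.sum_induction _ (fun I => I ≤ J' n) (fun a b ha hb => sup_le ha hb)
          bot_le ?_
        intro t ht
        rw [Finset.mem_Ico] at ht
        have := hA t (n - t)
        rwa [Nat.add_sub_cancel' (by omega : t ≤ n)] at this
end
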